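/- On the generalized Verma module P with Ñv = ñv + w, the Casimirs act non-semisimply with Jordan rank exactly 2: Q₁v = (nẽ+ñe)v + e w and Q₂v = ñẽ v + ẽ w, while (Q₁ − (nẽ+ñe))² = 0 and (Q₂ − ñẽ)² = 0 on P. -/
import Mathlib

open Matrix

namespace GenVermaP

variable (n e nt et : ℂ)

/- The 4×4 blocks of the generator actions on one "Verma block" with basis
`(u, ψ⁻u, ψ̃⁻u, ψ̃⁻ψ⁻u)`, for a highest-weight-type generator `u` of weight
`(n, e, ñ, ẽ)` (derived from the `g̃l(1|1)` relations). -/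

noncomputable def N4 : Matrix (Fin 4) (Fin 4) ℂ :=
  !![n, 0, 0, 0; 0, n - 1, 0, 0; 0, 0, n - 1, 0; 0, 0, 0, n - 2]
noncomputable def E4 : Matrix (Fin 4) (Fin 4) ℂ := e • 1
noncomputable def Nt4 : Matrix (Fin 4) (Fin 4) ℂ :=
  !![nt, 0, 0, 0; 0, nt, 0, 0; 0, -1, nt, 0; 0, 0, 0, nt]
noncomputable def Et4 : Matrix (Fin 4) (Fin 4) ℂ := et • 1
noncomputable def pp4 : Matrix (Fin 4) (Fin 4) ℂ :=
  !![0, e, et, 0; 0, 0, 0, et; 0, 0, 0, -e; 0, 0, 0, 0]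
noncomputable def pm4 : Matrix (Fin 4) (Fin 4) ℂ :=
  !![0, 0, 0, 0; 1, 0, 0, 0; 0, 0, 0, 0; 0, 0, -1, 0]
noncomputable def tp4 : Matrix (Fin 4) (Fin 4) ℂ :=
  !![0, et, 0, 0; 0, 0, 0, 0; 0, 0, 0, -et; 0, 0, 0, 0]
noncomputable def tm4 : Matrix (Fin 4) (Fin 4) ℂ :=
  !![0, 0, 0, 0; 0, 0, 0, 0; 1, 0, 0, 0; 0, 1, 0, 0]

/- The 8×8 actions on the generalised Verma module `P` with basis the two blocks
generated by `v` and `w`, where `Ñv = ñv + w`, `Ñw = ñw`: every generator acts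
block-diagonally except `Ñ`, which has an identity off-diagonal block. -/

noncomputable def NP : Matrix (Fin 4 ⊕ Fin 4) (Fin 4 ⊕ Fin 4) ℂ :=
  fromBlocks (N4 n) 0 0 (N4 n)
noncomputable def EP : Matrix (Fin 4 ⊕ Fin 4) (Fin 4 ⊕ Fin 4) ℂ :=
  fromBlocks (E4 e) 0 0 (E4 e)
noncomputable def NtP : Matrix (Fin 4 ⊕ Fin 4) (Fin 4 ⊕ Fin 4) ℂ :=
  fromBlocks (Nt4 nt) 0 1 (Nt4 nt)
noncomputable def EtP : Matrix (Fin 4 ⊕ Fin 4) (Fin 4 ⊕ Fin 4) ℂ :=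
  fromBlocks (Et4 et) 0 0 (Et4 et)
noncomputable def ppP : Matrix (Fin 4 ⊕ Fin 4) (Fin 4 ⊕ Fin 4) ℂ :=
  fromBlocks (pp4 e et) 0 0 (pp4 e et)
noncomputable def pmP : Matrix (Fin 4 ⊕ Fin 4) (Fin 4 ⊕ Fin 4) ℂ :=
  fromBlocks pm4 0 0 pm4
noncomputable def tpP : Matrix (Fin 4 ⊕ Fin 4) (Fin 4 ⊕ Fin 4) ℂ :=
  fromBlocks (tp4 et) 0 0 (tp4 et)
noncomputable def tmP : Matrix (Fin 4 ⊕ Fin 4) (Fin 4 ⊕ Fin 4) ℂ :=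
  fromBlocks tm4 0 0 tm4

/-- The Casimir `Q₁ = NẼ + ÑE + ψ⁻ψ̃⁺ + ψ̃⁻ψ⁺` acting on `P`. -/
noncomputable def Q1 : Matrix (Fin 4 ⊕ Fin 4) (Fin 4 ⊕ Fin 4) ℂ :=
  NP n * EtP et + NtP nt * EP e + pmP * tpP et + tmP * ppP e et

/-- The Casimir `Q₂ = ÑẼ + ψ̃⁻ψ̃⁺` acting on `P`. -/
noncomputable def Q2 : Matrix (Fin 4 ⊕ Fin 4) (Fin 4 ⊕ Fin 4) ℂ :=
  NtP nt * EtP et + tmP * tpP et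

set_option maxHeartbeats 1000000 in
lemma block1_eq :
    N4 n * Et4 et + Nt4 nt * E4 e + pm4 * tp4 et + tm4 * pp4 e et
      = (n * et + nt * e) • 1 := by
  simp only [E4, Et4, Matrix.mul_smul, Matrix.mul_one, Matrix.smul_mul, Matrix.one_mul]
  ext i j
  fin_cases i <;> fin_cases j <;>
    simp [N4, Nt4, pm4, tp4, tm4, pp4, Matrix.mul_apply, Fin.sum_univ_four,
      Matrix.one_apply, Matrix.smul_apply, Matrix.vecHead, Matrix.vecTail] <;> ring

lemma block2_eq :
    Nt4 nt * Et4 et + tm4 * tp4 et = (nt * et) • 1 := by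
  simp only [Et4, Matrix.mul_smul, Matrix.mul_one]
  ext i j
  fin_cases i <;> fin_cases j <;>
    simp [Nt4, tm4, tp4, Matrix.mul_apply, Fin.sum_univ_four,
      Matrix.one_apply, Matrix.smul_apply, Matrix.vecHead, Matrix.vecTail] <;> ring

lemma Q1_eq : Q1 n e nt et =
    fromBlocks ((n * et + nt * e) • 1) 0 (e • 1) ((n * et + nt * e) • 1) := by
  rw [Q1, NP, EtP, NtP, EP, pmP, tpP, tmP, ppP]
  simp only [Matrix.fromBlocks_multiply, Matrix.fromBlocks_add]
  simp only [Matrix.mul_zero, Matrix.zero_mul, zero_add, add_zero, Matrix.one_mul]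
  rw [block1_eq, E4]

lemma Q2_eq : Q2 nt et =
    fromBlocks ((nt * et) • 1) 0 (et • 1) ((nt * et) • 1) := by
  rw [Q2, NtP, EtP, tmP, tpP]
  simp only [Matrix.fromBlocks_multiply, Matrix.fromBlocks_add]
  simp only [Matrix.mul_zero, Matrix.zero_mul, zero_add, add_zero, Matrix.one_mul]
  rw [block2_eq, Et4]

end GenVermaP

open GenVermaP in
/-- On the generalised Verma module `P` of the Takiff superalgebra of `gl(1|1)` with
`Ñv = ñv + w`, the Casimirs act non-semisimply with Jordan rank exactly 2:
`Q₁v = (nẽ+ñe)v + e w`, `Q₂v = ñẽ v + ẽ w`, while `(Q₁ − (nẽ+ñe))² = 0` and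
`(Q₂ − ñẽ)² = 0` on `P`. -/
theorem generalized_verma_casimirs_jordan_rank_two (n e nt et : ℂ) (het : et ≠ 0) :
    Q1 n e nt et *ᵥ (Pi.single (Sum.inl 0) 1 : Fin 4 ⊕ Fin 4 → ℂ) =
      (n * et + nt * e) • (Pi.single (Sum.inl 0) 1 : Fin 4 ⊕ Fin 4 → ℂ) +
        e • (Pi.single (Sum.inr 0) 1 : Fin 4 ⊕ Fin 4 → ℂ) ∧
    Q2 nt et *ᵥ (Pi.single (Sum.inl 0) 1 : Fin 4 ⊕ Fin 4 → ℂ) =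
      (nt * et) • (Pi.single (Sum.inl 0) 1 : Fin 4 ⊕ Fin 4 → ℂ) +
        et • (Pi.single (Sum.inr 0) 1 : Fin 4 ⊕ Fin 4 → ℂ) ∧
    (Q1 n e nt et - (n * et + nt * e) • 1) ^ 2 = 0 ∧
    (Q2 nt et - (nt * et) • 1) ^ 2 = 0 := by
  have h1 : Q1 n e nt et - (n * et + nt * e) • 1 = fromBlocks 0 0 (e • 1) 0 := by
    rw [Q1_eq]
    ext (i | i) (j | j) <;>
      simp [Matrix.fromBlocks_apply₁₁, Matrix.fromBlocks_apply₁₂,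
        Matrix.fromBlocks_apply₂₁, Matrix.fromBlocks_apply₂₂,
        Matrix.sub_apply, Matrix.smul_apply, Matrix.one_apply]
  have h2 : Q2 nt et - (nt * et) • 1 = fromBlocks 0 0 (et • 1) 0 := by
    rw [Q2_eq]
    ext (i | i) (j | j) <;>
      simp [Matrix.fromBlocks_apply₁₁, Matrix.fromBlocks_apply₁₂,
        Matrix.fromBlocks_apply₂₁, Matrix.fromBlocks_apply₂₂,
        Matrix.sub_apply, Matrix.smul_apply, Matrix.one_apply]
  refine ⟨?_, ?_, ?_, ?_⟩
  · rw [Q1_eq]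
    ext (i | i) <;> fin_cases i <;>
      simp [Matrix.mulVec, dotProduct, Fintype.sum_sum_type,
        Fin.sum_univ_four, Pi.single_apply, Matrix.fromBlocks_apply₁₁,
        Matrix.fromBlocks_apply₁₂, Matrix.fromBlocks_apply₂₁,
        Matrix.fromBlocks_apply₂₂, Matrix.one_apply]
  · rw [Q2_eq]
    ext (i | i) <;> fin_cases i <;>
      simp [Matrix.mulVec, dotProduct, Fintype.sum_sum_type,
        Fin.sum_univ_four, Pi.single_apply, Matrix.fromBlocks_apply₁₁,
        Matrix.fromBlocks_apply₁₂, Matrix.fromBlocks_apply₂₁,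
        Matrix.fromBlocks_apply₂₂, Matrix.one_apply]
  · rw [h1, sq, Matrix.fromBlocks_multiply]; simp
  · rw [h2, sq, Matrix.fromBlocks_multiply]; simp
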